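/- Let r- < r+ be positive real numbers and let f : ℝ → ℝ be twice continuously differentiable on [r-, r+] with f(r-) = f(r+) = 0, f(r) < 0 for all r in (r-, r+), f'(r-) ≠ 0 and f'(r+) ≠ 0, and set kappa- := (1/2) * f'(r-). Let r : ℝ → (r-, r+) be a differentiable function satisfying r'(tau) = f(r(tau)) for all tau in ℝ. Then there exist a constant tau_L ≥ 0 and constants 0 < c ≤ C such that for all tau > tau_L: c * exp(2*kappa-*tau) ≤ r(tau) - r- ≤ C * exp(2*kappa-*tau) and c * exp(2*kappa-*tau) ≤ -f(r(tau)) ≤ C * exp(2*kappa-*tau). -/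

import Mathlib

/-!
Put `u = r - r₋` and `κ = f'(r₋) < 0` (it is `≤ 0` since `r₋` maximises `f` on `[r₋, r₊)`).
Taylor's theorem gives `u'/u = f(r)/(r - r₋) = κ + O(u)`. Since `f < 0` on `(r₋, r₊)`, the
trajectory enters every neighbourhood of `r₋`; once the error `O(u)` is below `-κ/2`, the
log-derivative of `u` is at most `κ/2`, so `u` decays exponentially. The error in
`(log u)' = κ + O(u)` is then integrable on `[τ₀, ∞)`, so `log u - κτ` stays bounded, i.e.
`u ≍ exp(κτ)`, and `-f(r) = -u'` lies between `(-κ/2) u` and `(-3κ/2) u`.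
-/

open Set Real Filter

lemma derivWithin_Icc_left_nonpos {f : ℝ → ℝ} {a b : ℝ} (hab : a < b)
    (hmax : ∀ x ∈ Ioo a b, f x ≤ f a) : derivWithin f (Icc a b) a ≤ 0 := by
  have hloc : IsLocalMaxOn f (Icc a b) a := by
    filter_upwards [self_mem_nhdsWithin, nhdsWithin_le_nhds (Iio_mem_nhds hab)]
      with x ⟨hax, _⟩ hxb
    rcases hax.eq_or_lt with rfl | hax
    · exact le_rfl
    · exact hmax x ⟨hax, hxb⟩
  have hone : (1 : ℝ) ∈ posTangentConeAt (Icc a b) a :=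
    one_mem_posTangentConeAt_iff_frequently.2 (Eventually.frequently (Icc_mem_nhdsGT hab))
  exact hloc.fderivWithin_nonpos hone

lemma exists_pos_abs_sub_taylor_le_sq {f : ℝ → ℝ} {a b : ℝ} (hab : a ≤ b)
    (hf : ContDiffOn ℝ 2 f (Icc a b)) :
    ∃ K > 0, ∀ x ∈ Icc a b,
      |f x - f a - derivWithin f (Icc a b) a * (x - a)| ≤ K * (x - a) ^ 2 := by
  obtain ⟨K, hK⟩ := exists_taylor_mean_remainder_bound (n := 1) hab hf
  refine ⟨max K 1, by positivity, fun x hx => ?_⟩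
  have htaylor := hK x hx
  simp only [taylorWithinEval_succ, taylor_within_zero_eval, CharP.cast_eq_zero, zero_add,
    Nat.factorial_zero, Nat.cast_one, mul_one, inv_one, pow_one, one_mul, iteratedDerivWithin_one,
    smul_eq_mul, norm_eq_abs, Nat.reduceAdd] at htaylor
  calc |f x - f a - derivWithin f (Icc a b) a * (x - a)|
      = |f x - (f a + (x - a) * derivWithin f (Icc a b) a)| := by ring_nf
    _ ≤ K * (x - a) ^ 2 := htaylor
    _ ≤ max K 1 * (x - a) ^ 2 := by gcongr; exact le_max_left _ _

lemma sub_le_mul_sub_of_hasDerivAt_le {F F' : ℝ → ℝ} {t₀ C : ℝ}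
    (hF : ∀ t, HasDerivAt F (F' t) t) (hle : ∀ t > t₀, F' t ≤ C) {t : ℝ} (ht : t₀ ≤ t) :
    F t - F t₀ ≤ C * (t - t₀) :=
  (convex_Ici t₀).image_sub_le_mul_sub_of_deriv_le
    (fun s _ => (hF s).continuousAt.continuousWithinAt)
    (fun s _ => (hF s).differentiableAt.differentiableWithinAt)
    (fun s hs => by rw [interior_Ici] at hs; rw [(hF s).deriv]; exact hle s hs)
    t₀ self_mem_Ici t ht ht

lemma abs_sub_le_of_abs_deriv_le_mul_exp {F F' : ℝ → ℝ} {t₀ M μ : ℝ} (hμ : μ < 0)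
    (hF : ∀ t, HasDerivAt F (F' t) t) (hF' : ∀ t ≥ t₀, |F' t| ≤ M * exp (μ * (t - t₀)))
    {t : ℝ} (ht : t₀ ≤ t) : |F t - F t₀| ≤ M / -μ := by
  set B : ℝ → ℝ := fun s => M / -μ * (1 - exp (μ * (s - t₀)))
  have hB : ∀ s, HasDerivAt B (M * exp (μ * (s - t₀))) s := by
    intro s
    refine (((((hasDerivAt_id' s).sub_const t₀).const_mul μ).exp.const_sub 1).const_mul
      (M / -μ)).congr_deriv ?_
    field_simp [hμ.ne]
  have hM : 0 ≤ M := by simpa using (abs_nonneg _).trans (hF' t₀ le_rfl)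
  have hfence := image_norm_le_of_norm_deriv_right_le_deriv_boundary
    (f := fun s => F s - F t₀) (a := t₀) (b := t)
    (fun s _ => ((hF s).sub_const _).continuousAt.continuousWithinAt)
    (fun s _ => ((hF s).sub_const _).hasDerivWithinAt) (by simp [B]) hB
    (fun s hs => hF' s hs.1) (right_mem_Icc.2 ht)
  calc |F t - F t₀| ≤ B t := hfence
    _ ≤ M / -μ := mul_le_of_le_one_right (div_nonneg hM (by linarith))
        (by linarith [exp_pos (μ * (t - t₀))])

lemma le_mul_exp_of_div_le {u u' : ℝ → ℝ} {t₀ μ : ℝ} (hu : ∀ t, 0 < u t)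
    (hderiv : ∀ t, HasDerivAt u (u' t) t) (hle : ∀ t > t₀, u' t / u t ≤ μ) {t : ℝ}
    (ht : t₀ ≤ t) : u t ≤ u t₀ * exp (μ * (t - t₀)) := by
  have hlog := sub_le_mul_sub_of_hasDerivAt_le (fun s => (hderiv s).log (hu s).ne') hle ht
  calc u t = exp (log (u t)) := (exp_log (hu t)).symm
    _ ≤ exp (log (u t₀) + μ * (t - t₀)) := exp_le_exp.2 (by linarith)
    _ = u t₀ * exp (μ * (t - t₀)) := by rw [exp_add, exp_log (hu t₀)]

section LogDerivNearConstant

variable {u u' : ℝ → ℝ} {κ K t₀ : ℝ}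

lemma abs_log_sub_mul_sub_le (hκ : κ < 0) (hu : ∀ t, 0 < u t)
    (hderiv : ∀ t, HasDerivAt u (u' t) t) (hlog : ∀ t ≥ t₀, |u' t / u t - κ| ≤ K * u t)
    (hsmall : ∀ t ≥ t₀, K * u t ≤ -κ / 2) {t : ℝ} (ht : t₀ ≤ t) :
    |(log (u t) - κ * t) - (log (u t₀) - κ * t₀)| ≤ K * u t₀ / -(κ / 2) := by
  have hK : 0 ≤ K := nonneg_of_mul_nonneg_left ((abs_nonneg _).trans (hlog t₀ le_rfl)) (hu t₀)
  have hdecay : ∀ s ≥ t₀, u s ≤ u t₀ * exp (κ / 2 * (s - t₀)) := fun s hs =>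
    le_mul_exp_of_div_le hu hderiv
      (fun s hs => by linarith [(abs_le.1 (hlog s hs.le)).2, hsmall s hs.le]) hs
  refine abs_sub_le_of_abs_deriv_le_mul_exp (by linarith)
    (fun s => ((hderiv s).log (hu s).ne').sub
      (((hasDerivAt_id' s).const_mul κ).congr_deriv (mul_one κ))) (fun s hs => ?_) ht
  calc |u' s / u s - κ| ≤ K * u s := hlog s hs
    _ ≤ K * u t₀ * exp (κ / 2 * (s - t₀)) := by
      rw [mul_assoc]; exact mul_le_mul_of_nonneg_left (hdecay s hs) hK

lemma exists_mul_exp_le_and_le_mul_exp (hκ : κ < 0) (hu : ∀ t, 0 < u t)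
    (hderiv : ∀ t, HasDerivAt u (u' t) t) (hlog : ∀ t ≥ t₀, |u' t / u t - κ| ≤ K * u t)
    (hsmall : ∀ t ≥ t₀, K * u t ≤ -κ / 2) :
    ∃ a A, 0 < a ∧ ∀ t ≥ t₀, a * exp (κ * t) ≤ u t ∧ u t ≤ A * exp (κ * t) := by
  refine ⟨exp (log (u t₀) - κ * t₀ - K * u t₀ / -(κ / 2)),
    exp (log (u t₀) - κ * t₀ + K * u t₀ / -(κ / 2)), exp_pos _, fun t ht => ?_⟩
  have hbdd := abs_le.1 (abs_log_sub_mul_sub_le hκ hu hderiv hlog hsmall ht)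
  have hu_eq : u t = exp (log (u t) - κ * t) * exp (κ * t) := by
    rw [← exp_add, sub_add_cancel, exp_log (hu t)]
  rw [hu_eq]
  exact ⟨mul_le_mul_of_nonneg_right (exp_le_exp.2 (by linarith)) (exp_pos _).le,
    mul_le_mul_of_nonneg_right (exp_le_exp.2 (by linarith)) (exp_pos _).le⟩

theorem exists_exp_bounds_of_abs_div_sub_le (hκ : κ < 0) (hu : ∀ t, 0 < u t)
    (hderiv : ∀ t, HasDerivAt u (u' t) t) (hlog : ∀ t ≥ t₀, |u' t / u t - κ| ≤ K * u t)
    (hsmall : ∀ t ≥ t₀, K * u t ≤ -κ / 2) :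
    ∃ c C, 0 < c ∧ c ≤ C ∧ ∀ t ≥ t₀,
      c * exp (κ * t) ≤ u t ∧ u t ≤ C * exp (κ * t) ∧
      c * exp (κ * t) ≤ -u' t ∧ -u' t ≤ C * exp (κ * t) := by
  obtain ⟨a, A, ha, hbounds⟩ := exists_mul_exp_le_and_le_mul_exp hκ hu hderiv hlog hsmall
  have haA : a ≤ A := le_of_mul_le_mul_right
    ((hbounds t₀ le_rfl).1.trans (hbounds t₀ le_rfl).2) (exp_pos _)
  have hcomp : ∀ t ≥ t₀, -κ / 2 * u t ≤ -u' t ∧ -u' t ≤ -3 * κ / 2 * u t := by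
    intro t ht
    have hq := abs_le.1 ((hlog t ht).trans (hsmall t ht))
    rw [← div_mul_cancel₀ (u' t) (hu t).ne']
    constructor <;> nlinarith [hu t]
  refine ⟨min a (-κ / 2 * a), max A (-3 * κ / 2 * A), lt_min ha (by nlinarith),
    (min_le_left _ _).trans (haA.trans (le_max_left _ _)), fun t ht => ?_⟩
  obtain ⟨hlo, hhi⟩ := hbounds t ht
  obtain ⟨hlo', hhi'⟩ := hcomp t ht
  have he := exp_pos (κ * t)
  refine ⟨?_, ?_, ?_, ?_⟩
  · calc min a (-κ / 2 * a) * exp (κ * t) ≤ a * exp (κ * t) := by gcongr; exact min_le_left _ _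
      _ ≤ u t := hlo
  · calc u t ≤ A * exp (κ * t) := hhi
      _ ≤ max A (-3 * κ / 2 * A) * exp (κ * t) := by gcongr; exact le_max_left _ _
  · calc min a (-κ / 2 * a) * exp (κ * t) ≤ -κ / 2 * a * exp (κ * t) := by
          gcongr; exact min_le_right _ _
      _ ≤ -κ / 2 * u t := by rw [mul_assoc]; gcongr; linarith
      _ ≤ -u' t := hlo'
  · calc -u' t ≤ -3 * κ / 2 * u t := hhi'
      _ ≤ -3 * κ / 2 * A * exp (κ * t) := by rw [mul_assoc]; gcongr; linarith
      _ ≤ max A (-3 * κ / 2 * A) * exp (κ * t) := by gcongr; exact le_max_right _ _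

end LogDerivNearConstant

lemma exists_forall_sub_le_of_hasDerivAt_neg {f r : ℝ → ℝ} {a b δ : ℝ} (hδ : 0 < δ)
    (hf : ContinuousOn f (Ioo a b)) (hneg : ∀ s ∈ Ioo a b, f s < 0)
    (hran : ∀ t, r t ∈ Ioo a b) (hode : ∀ t, HasDerivAt r (f (r t)) t) :
    ∃ t₀ ≥ 0, ∀ t ≥ t₀, r t - a ≤ δ := by
  have hanti : Antitone r := (strictAnti_of_hasDerivAt_neg hode fun t => hneg _ (hran t)).antitone
  suffices ∃ t₀ ≥ 0, r t₀ - a ≤ δ by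
    obtain ⟨t₀, ht₀, hclose⟩ := this
    exact ⟨t₀, ht₀, fun t ht => (sub_le_sub_right (hanti ht) a).trans hclose⟩
  -- Otherwise `r` stays in a compact interval on which `f ≤ f x < 0`, so it falls below `a`.
  by_contra! hfar
  have hS : Icc (a + δ) (r 0) ⊆ Ioo a b :=
    fun s hs => ⟨by linarith [hs.1], hs.2.trans_lt (hran 0).2⟩
  obtain ⟨x, hxS, hxmax⟩ := isCompact_Icc.exists_isMaxOn
    ⟨r 0, by linarith [hfar 0 le_rfl], le_rfl⟩ (hf.mono hS)
  have hfx := hneg x (hS hxS)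
  have hdrift : ∀ t ≥ 0, r t - r 0 ≤ f x * (t - 0) := fun t ht =>
    sub_le_mul_sub_of_hasDerivAt_le hode
      (fun s hs => hxmax ⟨by linarith [hfar s hs.le], hanti hs.le⟩) ht
  set T := (r 0 - a) / -f x
  have hT := hdrift T (div_nonneg (by linarith [hfar 0 le_rfl]) (by linarith))
  have hfT : f x * (T - 0) = a - r 0 := by
    simp only [T, sub_zero]
    field_simp [hfx.ne]
    ring
  linarith [(hran T).1]

theorem stmt8 (rm rp : ℝ) (hlt : rm < rp) (f : ℝ → ℝ)
    (hf : ContDiffOn ℝ 2 f (Set.Icc rm rp))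
    (hfm : f rm = 0)
    (hneg : ∀ s ∈ Set.Ioo rm rp, f s < 0)
    (hdm : derivWithin f (Set.Icc rm rp) rm ≠ 0)
    (r : ℝ → ℝ) (hran : ∀ τ : ℝ, r τ ∈ Set.Ioo rm rp)
    (hode : ∀ τ : ℝ, HasDerivAt r (f (r τ)) τ) :
    ∃ τL ≥ (0 : ℝ), ∃ c C : ℝ, 0 < c ∧ c ≤ C ∧
      ∀ τ : ℝ, τ > τL →
        c * Real.exp (2 * (1 / 2 * derivWithin f (Set.Icc rm rp) rm) * τ) ≤ r τ - rm ∧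
        r τ - rm ≤ C * Real.exp (2 * (1 / 2 * derivWithin f (Set.Icc rm rp) rm) * τ) ∧
        c * Real.exp (2 * (1 / 2 * derivWithin f (Set.Icc rm rp) rm) * τ) ≤ -f (r τ) ∧
        -f (r τ) ≤ C * Real.exp (2 * (1 / 2 * derivWithin f (Set.Icc rm rp) rm) * τ) := by
  set κ := derivWithin f (Icc rm rp) rm
  have hκ : κ < 0 :=
    (derivWithin_Icc_left_nonpos hlt fun s hs => hfm ▸ (hneg s hs).le).lt_of_ne hdm
  obtain ⟨K, hK, htaylor⟩ := exists_pos_abs_sub_taylor_le_sq hlt.le hf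
  have hu : ∀ τ, 0 < r τ - rm := fun τ => sub_pos.2 (hran τ).1
  have hlog : ∀ τ, |f (r τ) / (r τ - rm) - κ| ≤ K * (r τ - rm) := by
    intro τ
    have h := htaylor (r τ) (Ioo_subset_Icc_self (hran τ))
    rw [hfm, sub_zero] at h
    rw [div_sub' (hu τ).ne', abs_div, abs_of_pos (hu τ), div_le_iff₀ (hu τ)]
    rwa [mul_comm (r τ - rm) κ, mul_assoc, ← sq]
  obtain ⟨τ₀, hτ₀, hclose⟩ := exists_forall_sub_le_of_hasDerivAt_neg (δ := -κ / (2 * K))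
    (div_pos (by linarith) (by positivity)) (hf.continuousOn.mono Ioo_subset_Icc_self)
    hneg hran hode
  have hsmall : ∀ τ ≥ τ₀, K * (r τ - rm) ≤ -κ / 2 := fun τ hτ =>
    calc K * (r τ - rm) ≤ K * (-κ / (2 * K)) := by gcongr; exact hclose τ hτ
      _ = -κ / 2 := by field_simp
  obtain ⟨c, C, hc, hcC, hbounds⟩ := exists_exp_bounds_of_abs_div_sub_le hκ hu
    (fun τ => (hode τ).sub_const rm) (fun τ _ => hlog τ) hsmall
  refine ⟨τ₀, hτ₀, c, C, hc, hcC, fun τ hτ => ?_⟩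
  rw [show 2 * (1 / 2 * κ) * τ = κ * τ by ring]
  exact hbounds τ hτ.le
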